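/- Let A ∈ F_q^{n×n} and C ∈ F_q^{k×k}. Suppose A is singular (there exists a nonzero v with Av = 0) and C^T is singular (there exists a nonzero row vector w with wC = 0). Then there exists a nonzero codeword B ∈ R(A,C) whose Hamming weight is at most (rank(A)+1)·(rank(C)+1); in particular the minimum distance of R(A,C) is at most (rank(A)+1)·(rank(C)+1). -/

import Mathlib

/-!
Any `rank A + 1` columns of `A` are linearly dependent, so a singular `A` has a nonzero kernel
vector `v` supported on at most `rank A + 1` coordinates; likewise `C` has a nonzero left kernel
vector `w` of weight at most `rank C + 1`. The rank-one matrix `B = v wᵀ` then satisfies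
`A B = 0 = B C`, and its support is the product of the supports of `v` and `w`.
-/

/-- Hamming weight of an `n × k` matrix: the number of nonzero entries. -/
def matrixWt {F : Type*} [Field F] [DecidableEq F] {n k : ℕ}
    (B : Matrix (Fin n) (Fin k) F) : ℕ :=
  (Finset.univ.filter fun p : Fin n × Fin k => B p.1 p.2 ≠ 0).card

namespace Matrix

variable {F m n : Type*} [Field F] [Fintype n]

theorem exists_mulVec_eq_zero_of_rank_lt_card (A : Matrix m n F) {s : Finset n}
    (hs : A.rank < s.card) : ∃ v : n → F, v ≠ 0 ∧ A *ᵥ v = 0 ∧ ∀ i ∉ s, v i = 0 := by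
  set L := A.mulVecLin ∘ₗ Function.ExtendByZero.linearMap F ((↑) : s → n)
  have hL : Module.finrank F (LinearMap.range L) < Module.finrank F (s → F) := by
    calc Module.finrank F (LinearMap.range L) ≤ A.rank :=
          Submodule.finrank_mono (LinearMap.range_comp_le_range _ _)
      _ < _ := by simpa using hs
  obtain ⟨x, hx, hx0⟩ := Submodule.exists_mem_ne_zero_of_ne_bot <|
    LinearMap.ker_rangeRestrict L ▸ LinearMap.ker_ne_bot_of_finrank_lt hL
  refine ⟨Function.extend ((↑) : s → n) x 0, fun h => hx0 ?_, LinearMap.mem_ker.mp hx,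
    fun i hi => ?_⟩
  · exact funext fun j => by simpa [Subtype.val_injective.extend_apply] using congrFun h j
  · exact Function.extend_apply' _ _ _ fun ⟨j, hj⟩ => hi (hj ▸ j.2)

theorem rank_lt_card_of_mulVec_eq_zero (A : Matrix m n F) {v : n → F} (hv : v ≠ 0)
    (hAv : A *ᵥ v = 0) : A.rank < Fintype.card n := by
  have hker : 0 < Module.finrank F (LinearMap.ker A.mulVecLin) :=
    Module.finrank_pos_iff_exists_ne_zero.mpr ⟨⟨v, hAv⟩, fun h => hv (congrArg Subtype.val h)⟩
  have h : A.rank + _ = _ := A.mulVecLin.finrank_range_add_finrank_ker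
  rw [Module.finrank_fintype_fun_eq_card] at h
  omega

theorem exists_mulVec_eq_zero_hammingNorm_le [DecidableEq F] (A : Matrix m n F) {v : n → F}
    (hv : v ≠ 0) (hAv : A *ᵥ v = 0) :
    ∃ v : n → F, v ≠ 0 ∧ A *ᵥ v = 0 ∧ hammingNorm v ≤ A.rank + 1 := by
  obtain ⟨s, -, hs⟩ := Finset.exists_subset_card_eq (s := Finset.univ)
    (A.rank_lt_card_of_mulVec_eq_zero hv hAv)
  obtain ⟨u, hu, hAu, hsupp⟩ := A.exists_mulVec_eq_zero_of_rank_lt_card (s := s) (by omega)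
  refine ⟨u, hu, hAu, (Finset.card_le_card fun i hi => ?_).trans hs.le⟩
  by_contra his
  exact (Finset.mem_filter.mp hi).2 (hsupp i his)

end Matrix

open Matrix

theorem matrixWt_vecMulVec {F : Type*} [Field F] [DecidableEq F] {n k : ℕ}
    (v : Fin n → F) (w : Fin k → F) :
    matrixWt (vecMulVec v w) = hammingNorm v * hammingNorm w := by
  rw [matrixWt, hammingNorm, hammingNorm, ← Finset.card_product, ← Finset.filter_product]
  simp [vecMulVec_apply]

/-- If `A` is singular and `Cᵀ` is singular, then there is a
nonzero codeword `B ∈ R(A,C)` of Hamming weight at most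
`(rank(A)+1)·(rank(C)+1)`; in particular the minimum distance of `R(A,C)` is
at most `(rank(A)+1)·(rank(C)+1)`. -/
theorem intertwining_min_distance_rank_bound
    (F : Type*) [Field F] [DecidableEq F] (n k : ℕ)
    (A : Matrix (Fin n) (Fin n) F) (C : Matrix (Fin k) (Fin k) F)
    (hA : ∃ v : Fin n → F, v ≠ 0 ∧ A.mulVec v = 0)
    (hC : ∃ w : Fin k → F, w ≠ 0 ∧ Matrix.vecMul w C = 0) :
    (∃ B : Matrix (Fin n) (Fin k) F,
        B ≠ 0 ∧ A * B = B * C ∧ matrixWt B ≤ (A.rank + 1) * (C.rank + 1)) ∧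
    sInf {m : ℕ | ∃ B : Matrix (Fin n) (Fin k) F,
        B ≠ 0 ∧ A * B = B * C ∧ matrixWt B = m} ≤
      (A.rank + 1) * (C.rank + 1) := by
  obtain ⟨v₀, hv₀, hAv₀⟩ := hA
  obtain ⟨w₀, hw₀, hw₀C⟩ := hC
  obtain ⟨v, hv, hAv, hv_wt⟩ := A.exists_mulVec_eq_zero_hammingNorm_le hv₀ hAv₀
  obtain ⟨w, hw, hwC, hw_wt⟩ :=
    Cᵀ.exists_mulVec_eq_zero_hammingNorm_le hw₀ (by rwa [mulVec_transpose])
  rw [mulVec_transpose] at hwC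
  rw [rank_transpose] at hw_wt
  have hB : A * vecMulVec v w = vecMulVec v w * C := by
    ext i j
    simp [mul_vecMulVec, vecMulVec_mul, hAv, hwC, vecMulVec_apply]
  have hB_ne : vecMulVec v w ≠ 0 := by
    obtain ⟨i, hi⟩ := Function.ne_iff.mp hv
    obtain ⟨j, hj⟩ := Function.ne_iff.mp hw
    exact fun h => mul_ne_zero hi hj congr($h i j)
  have hB_wt : matrixWt (vecMulVec v w) ≤ (A.rank + 1) * (C.rank + 1) :=
    matrixWt_vecMulVec v w ▸ Nat.mul_le_mul hv_wt hw_wt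
  exact ⟨⟨vecMulVec v w, hB_ne, hB, hB_wt⟩,
    le_trans (Nat.sInf_le ⟨vecMulVec v w, hB_ne, hB, rfl⟩) hB_wt⟩
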